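/- arXiv:1009.4170 — 3 statements merged into one kernel-verified Lean document; each statement's English description precedes it below -/
import Mathlib

section
/- For any skew diagram λ/μ (where μ ⊆ λ as Young diagrams), the partition cols(λ/μ), formed by sorting the column lengths of λ/μ into decreasing order, is dominated by the conjugate of the partition rows(λ/μ), formed by sorting the row lengths of λ/μ into decreasing order. -/
/-!
Any `k` columns of `λ/μ`, in particular those of the `k` longest, contain together at most
`∑ᵢ min (λᵢ - μᵢ) k` cells, since row `i` meets them in at most `min (λᵢ - μᵢ) k` cells.
That bound is the sum of the first `k` parts of the conjugate of `rows(λ/μ)`.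
-/

def part (l : List ℕ) (i : ℕ) : ℕ := l.getD i 0

def IsPartitionOf (n : ℕ) (l : List ℕ) : Prop :=
  l.Pairwise (· ≥ ·) ∧ (∀ p ∈ l, 0 < p) ∧ l.sum = n

def Dom (a b : ℕ → ℕ) : Prop :=
  ∀ i, ∑ j ∈ Finset.range i, a j ≤ ∑ j ∈ Finset.range i, b j

def conj (l : List ℕ) (i : ℕ) : ℕ := (l.filter (fun p => decide (i + 1 ≤ p))).length

/-- The list of column lengths of the skew diagram `l/m`: the `j`-th column
has length `l'ⱼ - m'ⱼ`. -/
def colLens (l m : List ℕ) : List ℕ :=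
  (List.range (part l 0)).map (fun j => conj l j - conj m j)

/-- The `k`-th part (0-indexed) of the conjugate of `rows(l/m)`: the number of
rows of the skew diagram `l/m` of length at least `k+1`. -/
def rowsConj (l m : List ℕ) (k : ℕ) : ℕ :=
  ((Finset.range l.length).filter (fun i => k + 1 ≤ part l i - part m i)).card

open Finset

lemma sum_range_part (l : List ℕ) (k : ℕ) : ∑ t ∈ range k, part l t = (l.take k).sum := by
  induction l generalizing k with
  | nil => simp [part]
  | cons a t ih =>
    cases k with
    | zero => simp
    | succ k => simp [sum_range_succ', part, ← ih, add_comm]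

lemma part_eq_zero_of_length_le {l : List ℕ} {i : ℕ} (hi : l.length ≤ i) : part l i = 0 :=
  List.getD_eq_default _ _ hi

lemma conj_eq_card (l : List ℕ) (j : ℕ) : conj l j = #{i ∈ range l.length | j < part l i} := by
  induction l with
  | nil => simp [conj]
  | cons a t ih =>
    have hcons : conj (a :: t) j = conj t j + if j < a then 1 else 0 := by
      by_cases h : j < a <;> simp [conj, h]
    rw [hcons, ih, card_filter, card_filter, List.length_cons, sum_range_succ']
    simp [part]

lemma conj_eq_card_of_part_eq_zero {l : List ℕ} {N : ℕ} (hN : ∀ i, N ≤ i → part l i = 0)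
    (j : ℕ) : conj l j = #{i ∈ range N | j < part l i} := by
  rw [conj_eq_card]
  congr 1
  ext i
  simp only [mem_filter, mem_range, and_congr_left_iff]
  intro hj
  constructor <;> intro _ <;> by_contra! hi
  · have := hN i hi
    omega
  · have := part_eq_zero_of_length_le hi
    omega

lemma conj_sub_conj {l m : List ℕ} (hsub : ∀ i, part m i ≤ part l i) (j : ℕ) :
    conj l j - conj m j = #{i ∈ range l.length | j ∈ Ico (part m i) (part l i)} := by
  have hm : ∀ i, l.length ≤ i → part m i = 0 := fun i hi =>
    Nat.eq_zero_of_le_zero (part_eq_zero_of_length_le hi ▸ hsub i)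
  rw [conj_eq_card, conj_eq_card_of_part_eq_zero hm,
    ← card_sdiff_of_subset (monotone_filter_right _ fun i _ hi => hi.trans_le (hsub i))]
  congr 1
  ext i
  simp only [mem_sdiff, mem_filter, mem_range, mem_Ico]
  omega

lemma sum_card_filter_mem_Ico_le {ι : Type*} (I : Finset ι) (a b : ι → ℕ) (S : Finset ℕ) :
    ∑ j ∈ S, #{i ∈ I | j ∈ Ico (a i) (b i)} ≤ ∑ i ∈ I, min (b i - a i) #S := by
  have hswap := sum_card_bipartiteAbove_eq_sum_card_bipartiteBelow (s := I) (t := S)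
    (r := fun i j => j ∈ Ico (a i) (b i))
  simp only [bipartiteAbove, bipartiteBelow] at hswap
  rw [← hswap]
  refine sum_le_sum fun i _ => ?_
  rw [filter_mem_eq_inter, ← Nat.card_Ico (a i) (b i)]
  exact le_min (card_le_card inter_subset_right) (card_le_card inter_subset_left)

lemma card_range_filter_lt (k r : ℕ) : #{t ∈ range k | t < r} = min r k := by
  rw [range_eq_Ico, Ico_filter_lt, Nat.card_Ico, Nat.sub_zero, min_comm]

lemma sum_range_rowsConj (l m : List ℕ) (k : ℕ) :
    ∑ t ∈ range k, rowsConj l m t = ∑ i ∈ range l.length, min (part l i - part m i) k := by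
  simp only [rowsConj, card_filter]
  rw [sum_comm]
  refine sum_congr rfl fun i _ => ?_
  simp only [Nat.add_one_le_iff, ← card_filter, card_range_filter_lt]

lemma List.Subperm.exists_finset_sum_eq {α M : Type*} [DecidableEq α] [AddCommMonoid M]
    {f : α → M} {s : List α} (hs : s.Nodup) {u : List M} (h : u.Subperm (s.map f)) :
    ∃ S : Finset α, #S = u.length ∧ u.sum = ∑ j ∈ S, f j := by
  obtain ⟨v, hvu, hv⟩ := h
  obtain ⟨w, hw, rfl⟩ := List.sublist_map_iff.mp hv
  have hwd : w.Nodup := hw.nodup hs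
  exact ⟨w.toFinset, by rw [List.toFinset_card_of_nodup hwd, ← hvu.length_eq, List.length_map],
    by rw [← hvu.sum_eq, List.sum_toFinset _ hwd]⟩

theorem cols_dom_rowsConj_general (l m : List ℕ)
    (hsub : ∀ i, part m i ≤ part l i)
    (c : List ℕ) (hc : c.Perm (colLens l m)) :
    Dom (part c) (rowsConj l m) := by
  intro k
  obtain ⟨S, hS, hsum⟩ :=
    ((c.take_sublist k).subperm.trans hc.subperm).exists_finset_sum_eq List.nodup_range
  calc ∑ t ∈ range k, part c t
      = ∑ j ∈ S, (conj l j - conj m j) := (sum_range_part c k).trans hsum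
    _ = ∑ j ∈ S, #{i ∈ range l.length | j ∈ Ico (part m i) (part l i)} :=
        sum_congr rfl fun j _ => conj_sub_conj hsub j
    _ ≤ ∑ i ∈ range l.length, min (part l i - part m i) #S := sum_card_filter_mem_Ico_le _ _ _ _
    _ ≤ ∑ i ∈ range l.length, min (part l i - part m i) k := by
        gcongr
        exact hS ▸ List.length_take_le k c
    _ = ∑ t ∈ range k, rowsConj l m t := (sum_range_rowsConj l m k).symm

/-- For a skew diagram `l/m`, the partition `cols(l/m)` (the decreasing
rearrangement `c` of the column lengths) is dominated by the conjugate of the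
partition `rows(l/m)` formed by the row lengths. -/
theorem cols_dom_rowsConj (nl nm : ℕ) (l m : List ℕ)
    (hl : IsPartitionOf nl l) (hm : IsPartitionOf nm m)
    (hsub : ∀ i, part m i ≤ part l i)
    (c : List ℕ) (hc : c.Perm (colLens l m)) (hcs : c.Pairwise (· ≥ ·)) :
    Dom (part c) (rowsConj l m) :=
  cols_dom_rowsConj_general l m hsub c hc
end

section
/- In the dominance lattice on partitions of n, if μ covers λ then μ is obtained from λ by moving exactly one box: there exist indices i < j with μᵢ = λᵢ + 1, μⱼ = λⱼ − 1, and μₖ = λₖ for all k ∉ {i, j}. -/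
/-!
Let `i` be the first row where `λ` and `μ` differ and `j + 1` the first index after `i + 1` at
which their partial sums agree again; dominance forces `λᵢ < μᵢ` and `λⱼ > μⱼ`, and the partial
sums of `λ` stay strictly below those of `μ` at the indices `i + 1, …, j`. Moving one box of `λ`
from row `j` to row `i` therefore gives a partition `ν` with `λ ≺ ν ⪯ μ`, and the covering
hypothesis forces `ν = μ`.
-/

def partialSum (a : ℕ → ℕ) (k : ℕ) : ℕ := ∑ t ∈ Finset.range k, a t

lemma partialSum_succ (a : ℕ → ℕ) (k : ℕ) : partialSum a (k + 1) = partialSum a k + a k :=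
  Finset.sum_range_succ a k

lemma part_eq_zero {l : List ℕ} {k : ℕ} (h : l.length ≤ k) : part l k = 0 :=
  List.getD_eq_default _ _ h

lemma antitone_part {l : List ℕ} (hl : l.Pairwise (· ≥ ·)) : Antitone (part l) := by
  intro a b hab
  by_cases hb : b < l.length
  · have ha : a < l.length := lt_of_le_of_lt hab hb
    rw [part, part, List.getD_eq_getElem _ _ ha, List.getD_eq_getElem _ _ hb]
    rcases hab.eq_or_lt with rfl | hlt
    · exact le_rfl
    · exact List.pairwise_iff_getElem.1 hl a b ha hb hlt
  · rw [part_eq_zero (not_lt.1 hb)]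
    exact Nat.zero_le _

lemma eq_of_part_eq {l m : List ℕ} (hl : ∀ p ∈ l, 0 < p) (hm : ∀ p ∈ m, 0 < p)
    (h : part l = part m) : l = m := by
  induction l generalizing m with
  | nil =>
    cases m with
    | nil => rfl
    | cons b s => exact absurd (congrFun h 0) (hm b List.mem_cons_self).ne
  | cons a t ih =>
    cases m with
    | nil => exact absurd (congrFun h 0) (hl a List.mem_cons_self).ne'
    | cons b s =>
      have hab : a = b := congrFun h 0
      have hts : t = s := ih (fun p hp => hl p (List.mem_cons_of_mem _ hp))
        (fun p hp => hm p (List.mem_cons_of_mem _ hp)) (funext fun k => congrFun h (k + 1))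
      rw [hab, hts]

lemma partialSum_part {l : List ℕ} {k : ℕ} (h : l.length ≤ k) : partialSum (part l) k = l.sum := by
  induction l generalizing k with
  | nil => simp [partialSum, part]
  | cons a t ih =>
    obtain ⟨k, rfl⟩ : ∃ k', k = k' + 1 := Nat.exists_eq_add_one.2 (by simp at h; omega)
    rw [partialSum, Finset.sum_range_succ', List.sum_cons, add_comm]
    exact congrArg (a + ·) (ih (by simpa using h))

lemma exists_part_eq_of_antitone {f : ℕ → ℕ} (hf : Antitone f) (hzero : ∃ N, f N = 0) :
    ∃ L : List ℕ, L.Pairwise (· ≥ ·) ∧ (∀ p ∈ L, 0 < p) ∧ part L = f := by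
  classical
  refine ⟨(List.range (Nat.find hzero)).map f, ?_, ?_, ?_⟩
  · exact List.pairwise_map.2 (List.pairwise_lt_range.imp fun h => hf h.le)
  · simpa [Nat.pos_iff_ne_zero] using fun k hk => Nat.find_min hzero hk
  · funext k
    by_cases hk : k < Nat.find hzero
    · simp [part, hk]
    · rw [part_eq_zero (by simpa using hk)]
      exact (Nat.le_zero.1 ((hf (not_lt.1 hk)).trans_eq (Nat.find_spec hzero))).symm

section moveBox

def moveBox (a : ℕ → ℕ) (i j : ℕ) (k : ℕ) : ℕ :=
  if k = i then a i + 1 else if k = j then a j - 1 else a k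

variable {a : ℕ → ℕ} {i j : ℕ}

lemma moveBox_left : moveBox a i j i = a i + 1 := if_pos rfl

lemma moveBox_right (hij : i ≠ j) : moveBox a i j j = a j - 1 := by
  simp [moveBox, hij.symm]

lemma moveBox_of_ne {k : ℕ} (hi : k ≠ i) (hj : k ≠ j) : moveBox a i j k = a k := by
  simp [moveBox, hi, hj]

lemma antitone_moveBox (ha : Antitone a) (hij : i < j) (hi : ∀ t < i, a i < a t)
    (hj : a (j + 1) < a j) : Antitone (moveBox a i j) := by
  refine antitone_nat_of_succ_le fun k => ?_
  have hk : a (k + 1) ≤ a k := ha k.le_succ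
  have hki : k + 1 = i → a i < a k := fun h => hi k (by omega)
  have hkj : k + 1 = j → a j ≤ a k := fun h => ha (by omega)
  have hii : k = i → a (i + 1) ≤ a i := fun h => ha (by omega)
  unfold moveBox
  split_ifs <;> subst_vars <;> omega

lemma partialSum_moveBox (hij : i < j) (hj : 0 < a j) (k : ℕ) :
    partialSum (moveBox a i j) k = partialSum a k + if i < k ∧ k ≤ j then 1 else 0 := by
  induction k with
  | zero => simp [partialSum]
  | succ k ih =>
    rw [partialSum_succ, partialSum_succ, ih]
    unfold moveBox
    split_ifs <;> subst_vars <;> omega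

end moveBox

lemma exists_lt_run_of_le {p q : ℕ → ℕ} (hle : ∀ k, p k ≤ q k) {k₀ N : ℕ} (hk₀ : p k₀ < q k₀)
    (hN : ∀ k ≥ N, p k = q k) :
    ∃ j, k₀ ≤ j ∧ p (j + 1) = q (j + 1) ∧ ∀ k, k₀ ≤ k → k ≤ j → p k < q k := by
  classical
  have hex : ∃ r, k₀ < r ∧ p r = q r := ⟨max N (k₀ + 1), by omega, hN _ (le_max_left _ _)⟩
  obtain ⟨hr, hpq⟩ := Nat.find_spec hex
  refine ⟨Nat.find hex - 1, by omega, by rwa [Nat.sub_add_cancel (by omega)], fun k hk hkj => ?_⟩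
  rcases hk.eq_or_lt with rfl | hlt
  · exact hk₀
  · exact (hle k).lt_of_ne fun h => Nat.find_min hex (by omega) ⟨hlt, h⟩

lemma exists_moveBox_between {a b : ℕ → ℕ} (ha : Antitone a) (hb : Antitone b)
    (hab : Dom a b) (hne : a ≠ b) {N : ℕ} (hN : ∀ k ≥ N, partialSum a k = partialSum b k) :
    ∃ i j, i < j ∧ 0 < a j ∧ Antitone (moveBox a i j) ∧
      Dom a (moveBox a i j) ∧ Dom (moveBox a i j) b := by
  classical
  replace hab : ∀ k, partialSum a k ≤ partialSum b k := hab
  have hdiff : ∃ k, a k ≠ b k := by simpa [funext_iff] using hne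
  have hfirst : ∃ i, a i ≠ b i ∧ ∀ t < i, a t = b t :=
    ⟨Nat.find hdiff, Nat.find_spec hdiff, fun t ht => not_not.1 (Nat.find_min hdiff ht)⟩
  obtain ⟨i, hne_i, hagree⟩ := hfirst
  have hsum_i : partialSum a i = partialSum b i :=
    Finset.sum_congr rfl fun t ht => hagree t (Finset.mem_range.1 ht)
  have hlt_i : a i < b i := by
    have := hab (i + 1)
    rw [partialSum_succ, partialSum_succ, hsum_i] at this
    omega
  obtain ⟨j, hij, hsum_j, hrun⟩ := exists_lt_run_of_le hab (k₀ := i + 1)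
    (by rw [partialSum_succ, partialSum_succ]; omega) hN
  have hgt_j : b j < a j := by
    have := hrun j hij le_rfl
    rw [partialSum_succ, partialSum_succ] at hsum_j
    omega
  have hle_succ_j : a (j + 1) ≤ b (j + 1) := by
    have := hab (j + 2)
    rw [partialSum_succ, partialSum_succ _ (j + 1)] at this
    omega
  have hpos_j : 0 < a j := by omega
  refine ⟨i, j, hij, hpos_j, ?_, fun k => ?_, fun k => ?_⟩
  · refine antitone_moveBox ha hij (fun t ht => ?_) ?_
    · rw [hagree t ht]; exact hlt_i.trans_le (hb ht.le)
    · exact hle_succ_j.trans_lt ((hb j.le_succ).trans_lt hgt_j)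
  · change partialSum _ k ≤ partialSum _ k
    rw [partialSum_moveBox hij hpos_j]
    exact Nat.le_add_right _ _
  · change partialSum _ k ≤ partialSum _ k
    rw [partialSum_moveBox hij hpos_j]
    split_ifs with hk
    · exact hrun k hk.1 hk.2
    · exact hab k

/-- In the dominance lattice on partitions of `n`, if `m` covers `l` then `m`
is obtained from `l` by moving exactly one box: there are indices `i < j` with
`mᵢ = lᵢ + 1`, `mⱼ = lⱼ - 1`, and `mₖ = lₖ` for all other `k`. -/
theorem cover_is_single_box_move (n : ℕ) (l m : List ℕ)
    (hl : IsPartitionOf n l) (hm : IsPartitionOf n m)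
    (hdom : Dom (part l) (part m)) (hne : l ≠ m)
    (hcov : ∀ ν, IsPartitionOf n ν → Dom (part l) (part ν) → Dom (part ν) (part m) →
      ν = l ∨ ν = m) :
    ∃ i j, i < j ∧ part m i = part l i + 1 ∧ part m j + 1 = part l j ∧
      ∀ k, k ≠ i → k ≠ j → part m k = part l k := by
  obtain ⟨hl_sorted, hl_pos, hl_sum⟩ := hl
  obtain ⟨hm_sorted, hm_pos, hm_sum⟩ := hm
  obtain ⟨i, j, hij, hpos_j, hanti, hlν, hνm⟩ :=
    exists_moveBox_between (antitone_part hl_sorted) (antitone_part hm_sorted) hdom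
      (mt (eq_of_part_eq hl_pos hm_pos) hne) (N := l.length + m.length) fun k hk => by
        rw [partialSum_part (by omega), partialSum_part (by omega), hl_sum, hm_sum]
  obtain ⟨ν, hν_sorted, hν_pos, hν⟩ := exists_part_eq_of_antitone hanti
    ⟨l.length + j + 1, by rw [moveBox_of_ne (by omega) (by omega), part_eq_zero (by omega)]⟩
  have hν_sum : ν.sum = n := by
    have := partialSum_moveBox (a := part l) hij hpos_j (ν.length + l.length + j + 1)
    rw [← hν, partialSum_part (by omega), partialSum_part (by omega), if_neg (by omega)] at this
    omega
  rw [← hν] at hlν hνm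
  rcases hcov ν ⟨hν_sorted, hν_pos, hν_sum⟩ hlν hνm with rfl | rfl
  · have := congrFun hν i
    rw [moveBox_left] at this
    omega
  · exact ⟨i, j, hij, by rw [hν, moveBox_left], by rw [hν, moveBox_right hij.ne]; omega,
      fun k hki hkj => by rw [hν, moveBox_of_ne hki hkj]⟩
end

section
/- For x ≥ y ≥ 1, the dominance interval from (1^{x+y}) to (2^y, 1^{x−y}) is the saturated chain (1^{x+y}) ≺ (2, 1^{x+y−2}) ≺ (2², 1^{x+y−4}) ≺ ⋯ ≺ (2^y, 1^{x−y}); in particular it has exactly y + 1 elements, namely the partitions (2^k, 1^{x+y−2k}) for 0 ≤ k ≤ y. -/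
/-!
The partial sums of `(2^k, 1^{x+y-2k})` are `min (2i) (min (i+k) (x+y))`, so among these
partitions dominance is just `k ≤ k'`. Conversely, a partition of `x + y` dominated by
`(2^y, 1^{x-y})` has first part at most `2`, hence all parts in `{1, 2}`, so it is again of the
form `(2^c, 1^{x+y-2c})`. The interval is thus a chain indexed by `0 ≤ k ≤ y`, and consecutive
members are covers because nothing lies strictly between `k` and `k + 1`.
-/

open Finset

/-- The partition `(2^k, 1^{x+y-2k})` of `x + y`. -/
def pk (x y k : ℕ) : List ℕ := List.replicate k 2 ++ List.replicate (x + y - 2 * k) 1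

lemma part_zero_le_of_dom {a b : List ℕ} (h : Dom (part a) (part b)) : part a 0 ≤ part b 0 := by
  simpa using h 1

lemma le_part_zero_of_mem {l : List ℕ} (hl : l.Pairwise (· ≥ ·)) {p : ℕ} (hp : p ∈ l) :
    p ≤ part l 0 := by
  cases l with
  | nil => simp at hp
  | cons a t =>
    rcases List.mem_cons.mp hp with rfl | hpt
    · exact le_rfl
    · exact (List.pairwise_cons.mp hl).1 p hpt

lemma exists_eq_replicate_two_append_replicate_one {l : List ℕ} (hl : l.Pairwise (· ≥ ·))
    (h12 : ∀ p ∈ l, p = 1 ∨ p = 2) :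
    ∃ a b, l = List.replicate a 2 ++ List.replicate b 1 := by
  induction l with
  | nil => exact ⟨0, 0, rfl⟩
  | cons p t ih =>
    obtain ⟨hpt, ht⟩ := List.pairwise_cons.mp hl
    rcases h12 p List.mem_cons_self with rfl | rfl
    · have ht1 : ∀ q ∈ t, q = 1 := fun q hq => by
        have := hpt q hq
        rcases h12 q (List.mem_cons_of_mem _ hq) with h | h <;> omega
      exact ⟨0, t.length + 1, by rw [List.eq_replicate_of_mem ht1]; simp [List.replicate_succ]⟩
    · obtain ⟨a, b, rfl⟩ := ih ht fun q hq => h12 q (List.mem_cons_of_mem _ hq)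
      exact ⟨a + 1, b, rfl⟩

section pk

variable {x y : ℕ}

lemma part_pk {k : ℕ} (hk : 2 * k ≤ x + y) (i : ℕ) :
    part (pk x y k) i = if i < k then 2 else if i < x + y - k then 1 else 0 := by
  simp only [part, pk, List.getD_eq_getElem?_getD, List.getElem?_append, List.length_replicate,
    List.getElem?_replicate]
  split_ifs <;> simp <;> omega

lemma sum_range_part_pk {k : ℕ} (hk : 2 * k ≤ x + y) (i : ℕ) :
    ∑ j ∈ range i, part (pk x y k) j = min (2 * i) (min (i + k) (x + y)) := by
  induction i with
  | zero => simp
  | succ i ih => rw [sum_range_succ, ih, part_pk hk i]; split_ifs <;> omega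

lemma dom_pk_iff {k k' : ℕ} (hk : 2 * k ≤ x + y) (hk' : 2 * k' ≤ x + y) :
    Dom (part (pk x y k)) (part (pk x y k')) ↔ k ≤ k' := by
  constructor
  · intro h
    have := h k
    rw [sum_range_part_pk hk, sum_range_part_pk hk'] at this
    omega
  · intro h i
    rw [sum_range_part_pk hk, sum_range_part_pk hk']
    omega

lemma pk_inj {k k' : ℕ} (hk : 2 * k ≤ x + y) (hk' : 2 * k' ≤ x + y)
    (h : pk x y k = pk x y k') : k = k' :=
  le_antisymm ((dom_pk_iff hk hk').mp (h ▸ fun _ => le_rfl))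
    ((dom_pk_iff hk' hk).mp (h ▸ fun _ => le_rfl))

lemma isPartitionOf_pk {k : ℕ} (hk : 2 * k ≤ x + y) : IsPartitionOf (x + y) (pk x y k) := by
  refine ⟨?_, ?_, ?_⟩
  · refine List.pairwise_append.mpr ⟨List.pairwise_replicate.mpr (by simp),
      List.pairwise_replicate.mpr (by simp), fun a ha b hb => ?_⟩
    rw [List.eq_of_mem_replicate ha, List.eq_of_mem_replicate hb]
    omega
  · intro p hp
    rcases List.mem_append.mp hp with hp | hp <;> rw [List.eq_of_mem_replicate hp] <;> omega
  · simp only [pk, List.sum_append, List.sum_replicate, smul_eq_mul]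
    omega

lemma exists_eq_pk_of_le_two {ν : List ℕ} (hν : IsPartitionOf (x + y) ν) (h2 : ∀ p ∈ ν, p ≤ 2) :
    ∃ c, 2 * c ≤ x + y ∧ ν = pk x y c := by
  obtain ⟨hs, hpos, hsum⟩ := hν
  obtain ⟨a, b, rfl⟩ := exists_eq_replicate_two_append_replicate_one hs fun p hp => by
    have := hpos p hp
    have := h2 p hp
    omega
  simp only [List.sum_append, List.sum_replicate, smul_eq_mul] at hsum
  exact ⟨a, by omega, by rw [pk, show x + y - 2 * a = b by omega]⟩

lemma exists_eq_pk_of_dom_pk {b : ℕ} (hb : 2 * b ≤ x + y) {ν : List ℕ}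
    (hν : IsPartitionOf (x + y) ν) (hd : Dom (part ν) (part (pk x y b))) :
    ∃ c ≤ b, ν = pk x y c := by
  have hhead : part ν 0 ≤ 2 := by
    have := part_zero_le_of_dom hd
    rw [part_pk hb] at this
    split_ifs at this <;> omega
  obtain ⟨c, hc, rfl⟩ :=
    exists_eq_pk_of_le_two hν fun p hp => (le_part_zero_of_mem hν.1 hp).trans hhead
  exact ⟨c, (dom_pk_iff hc hb).mp hd, rfl⟩

end pk

theorem column_times_column_interval_general (x y : ℕ) (hxy : y ≤ x) :
    (∀ ν, (IsPartitionOf (x + y) ν ∧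
        Dom (part (pk x y 0)) (part ν) ∧ Dom (part ν) (part (pk x y y))) ↔
      ∃ k ≤ y, ν = pk x y k) ∧
    (∀ k, k < y →
      Dom (part (pk x y k)) (part (pk x y (k + 1))) ∧ pk x y k ≠ pk x y (k + 1) ∧
      ∀ τ, IsPartitionOf (x + y) τ → Dom (part (pk x y k)) (part τ) →
        Dom (part τ) (part (pk x y (k + 1))) → τ = pk x y k ∨ τ = pk x y (k + 1)) ∧
    (∀ k k', k ≤ y → k' ≤ y → pk x y k = pk x y k' → k = k') := by
  refine ⟨fun ν => ⟨?_, ?_⟩, fun k hk => ?_, fun k k' hk hk' => pk_inj (by omega) (by omega)⟩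
  · rintro ⟨hν, -, hd⟩
    exact exists_eq_pk_of_dom_pk (by omega) hν hd
  · rintro ⟨k, hk, rfl⟩
    exact ⟨isPartitionOf_pk (by omega), (dom_pk_iff (by omega) (by omega)).mpr (Nat.zero_le k),
      (dom_pk_iff (by omega) (by omega)).mpr hk⟩
  · have hk1 : 2 * (k + 1) ≤ x + y := by omega
    refine ⟨(dom_pk_iff (by omega) hk1).mpr k.le_succ,
      fun h => k.succ_ne_self (pk_inj (by omega) hk1 h).symm, fun τ hτ hlo hhi => ?_⟩
    obtain ⟨j, hj, rfl⟩ := exists_eq_pk_of_dom_pk hk1 hτ hhi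
    have hkj : k ≤ j := (dom_pk_iff (by omega) (by omega)).mp hlo
    rcases (show j = k ∨ j = k + 1 by omega) with rfl | rfl
    · exact Or.inl rfl
    · exact Or.inr rfl

/-- For `x ≥ y ≥ 1` the dominance interval from `(1^{x+y})` to `(2^y, 1^{x-y})`
is the saturated chain of the partitions `(2^k, 1^{x+y-2k})`, `0 ≤ k ≤ y`:
these are exactly the elements of the interval, consecutive ones are covers,
and they are pairwise distinct, so the interval has exactly `y + 1` elements. -/
theorem column_times_column_interval (x y : ℕ) (hy : 1 ≤ y) (hxy : y ≤ x) :
    (∀ ν, (IsPartitionOf (x + y) ν ∧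
        Dom (part (pk x y 0)) (part ν) ∧ Dom (part ν) (part (pk x y y))) ↔
      ∃ k ≤ y, ν = pk x y k) ∧
    (∀ k, k < y →
      Dom (part (pk x y k)) (part (pk x y (k + 1))) ∧ pk x y k ≠ pk x y (k + 1) ∧
      ∀ τ, IsPartitionOf (x + y) τ → Dom (part (pk x y k)) (part τ) →
        Dom (part τ) (part (pk x y (k + 1))) → τ = pk x y k ∨ τ = pk x y (k + 1)) ∧
    (∀ k k', k ≤ y → k' ≤ y → pk x y k = pk x y k' → k = k') :=
  column_times_column_interval_general x y hxy
end
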